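/- For all positive integers n and m, there exists a diffeomorphism f from 𝔹ⁿ × 𝔹ᵐ (an open subset of ℝⁿ × ℝᵐ = ℝ^{n+m}) onto 𝔹^{n+m} such that both f and f⁻¹ are Lipschitz with respect to the Euclidean metric; that is, there are constants 0 < c ≤ C with c·‖p − q‖ ≤ ‖f(p) − f(q)‖ ≤ C·‖p − q‖ for all p, q ∈ 𝔹ⁿ × 𝔹ᵐ. -/

import Mathlib

/-- `𝔹ⁿ × 𝔹ᵐ` as a subset of `ℝⁿ × ℝᵐ` equipped with the Euclidean (`L²`) metric. -/
def prodBall (n m : ℕ) :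
    Set (WithLp 2 (EuclideanSpace ℝ (Fin n) × EuclideanSpace ℝ (Fin m))) :=
  {p | ‖(WithLp.equiv 2 (EuclideanSpace ℝ (Fin n) × EuclideanSpace ℝ (Fin m)) p).1‖ < 1 ∧
       ‖(WithLp.equiv 2 (EuclideanSpace ℝ (Fin n) × EuclideanSpace ℝ (Fin m)) p).2‖ < 1}

open Set Metric Real

namespace QIDB
noncomputable section

/-- auxiliary rational function -/
def hf (u v : ℝ) : ℝ := (1-v)^2/(1-u*v)

/-- coefficient function -/
def Af (u v : ℝ) : ℝ := 1/2 + hf u v / 2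

lemma Dpos {u v : ℝ} (hu0 : 0 ≤ u) (hu1 : u < 1) (hv0 : 0 ≤ v) (hv1 : v < 1) :
    0 < 1 - u*v := by nlinarith

lemma Dge {u v : ℝ} (hu1 : u ≤ 1) (hv0 : 0 ≤ v) : 1 - v ≤ 1 - u*v := by nlinarith

lemma hf_nonneg {u v : ℝ} (hu0 : 0 ≤ u) (hu1 : u < 1) (hv0 : 0 ≤ v) (hv1 : v < 1) :
    0 ≤ hf u v := by
  have := Dpos hu0 hu1 hv0 hv1
  exact div_nonneg (by positivity) this.le

lemma hf_le_one {u v : ℝ} (hu0 : 0 ≤ u) (hu1 : u < 1) (hv0 : 0 ≤ v) (hv1 : v < 1) :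
    hf u v ≤ 1 := by
  have hD := Dpos hu0 hu1 hv0 hv1
  rw [hf, div_le_one hD]; nlinarith

lemma Af_ge {u v : ℝ} (hu0 : 0 ≤ u) (hu1 : u < 1) (hv0 : 0 ≤ v) (hv1 : v < 1) :
    1/2 ≤ Af u v := by
  have := hf_nonneg hu0 hu1 hv0 hv1; rw [Af]; linarith

lemma Af_le {u v : ℝ} (hu0 : 0 ≤ u) (hu1 : u < 1) (hv0 : 0 ≤ v) (hv1 : v < 1) :
    Af u v ≤ 1 := by
  have := hf_le_one hu0 hu1 hv0 hv1; rw [Af]; linarith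

lemma Af_pos {u v : ℝ} (hu0 : 0 ≤ u) (hu1 : u < 1) (hv0 : 0 ≤ v) (hv1 : v < 1) :
    0 < Af u v := lt_of_lt_of_le (by norm_num) (Af_ge hu0 hu1 hv0 hv1)

lemma sum_eq {u v : ℝ} (hu0 : 0 ≤ u) (hu1 : u < 1) (hv0 : 0 ≤ v) (hv1 : v < 1) :
    u * Af u v + v * Af v u = (u + v - 2*(u*v))/(1-u*v) := by
  have hD := Dpos hu0 hu1 hv0 hv1
  have hD' : (1:ℝ) - v*u ≠ 0 := by rw [mul_comm]; exact hD.ne'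
  rw [Af, Af, hf, hf]
  field_simp
  ring

lemma diff_eq {u v : ℝ} (hu0 : 0 ≤ u) (hu1 : u < 1) (hv0 : 0 ≤ v) (hv1 : v < 1) :
    u * Af u v - v * Af v u = u - v := by
  have hD := Dpos hu0 hu1 hv0 hv1
  have hD' : (1:ℝ) - v*u ≠ 0 := by rw [mul_comm]; exact hD.ne'
  rw [Af, Af, hf, hf]
  field_simp
  ring

lemma sum_lt {u v : ℝ} (hu0 : 0 ≤ u) (hu1 : u < 1) (hv0 : 0 ≤ v) (hv1 : v < 1) :
    u * Af u v + v * Af v u < 1 := by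
  have hD := Dpos hu0 hu1 hv0 hv1
  rw [sum_eq hu0 hu1 hv0 hv1, div_lt_one hD]
  nlinarith

lemma hf_lip_u {u u' v : ℝ} (hu0 : 0 ≤ u) (hu1 : u < 1) (hu0' : 0 ≤ u') (hu1' : u' < 1)
    (hv0 : 0 ≤ v) (hv1 : v < 1) : |hf u v - hf u' v| ≤ |u - u'| := by
  have hD := Dpos hu0 hu1 hv0 hv1
  have hD' := Dpos hu0' hu1' hv0 hv1
  have key : hf u v - hf u' v = (1-v)^2 * v * (u - u') / ((1-u*v)*(1-u'*v)) := by
    rw [hf, hf, div_sub_div _ _ hD.ne' hD'.ne']; congr 1; ring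
  rw [key, abs_div, abs_mul, abs_mul]
  rw [div_le_iff₀ (by positivity)]
  have h1 : |(1-v)^2| = (1-v)^2 := abs_of_nonneg (by positivity)
  have h2 : |v| = v := abs_of_nonneg hv0
  have h3 : |(1-u*v)*(1-u'*v)| = (1-u*v)*(1-u'*v) := abs_of_nonneg (by positivity)
  rw [h1, h2, h3]
  have e1 : 1 - v ≤ 1 - u*v := by nlinarith
  have e2 : 1 - v ≤ 1 - u'*v := by nlinarith
  have e3 : (1-v)*(1-v) ≤ (1-u*v)*(1-u'*v) := mul_le_mul e1 e2 (by linarith) (by linarith)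
  have hb : (1-v)^2 * v ≤ (1-u*v)*(1-u'*v) := by nlinarith [e3]
  nlinarith [abs_nonneg (u - u')]

lemma hf_lip_v {u v v' : ℝ} (hu0 : 0 ≤ u) (hu1 : u < 1)
    (hv : v ∈ Ico (0:ℝ) 1) (hv' : v' ∈ Ico (0:ℝ) 1) :
    |hf u v - hf u v'| ≤ 2 * |v - v'| := by
  have hderiv : ∀ t ∈ Ico (0:ℝ) 1, HasDerivWithinAt (fun s => hf u s)
      ((-(2*(1-t))*(1-u*t) - (1-t)^2*(-u))/(1-u*t)^2) (Ico (0:ℝ) 1) t := by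
    intro t ht
    have hD := Dpos hu0 hu1 ht.1 ht.2
    have h1 : HasDerivAt (fun s:ℝ => (1-s)^2) (-(2*(1-t))) t := by
      have := ((hasDerivAt_id t).const_sub (1:ℝ)).fun_pow 2
      simpa [mul_comm] using this
    have h2 : HasDerivAt (fun s:ℝ => 1-u*s) (-u) t := by
      simpa using ((hasDerivAt_id t).const_mul u).const_sub (1:ℝ)
    exact ((h1.div h2 hD.ne').hasDerivWithinAt)
  have hbound : ∀ t ∈ Ico (0:ℝ) 1,
      ‖(-(2*(1-t))*(1-u*t) - (1-t)^2*(-u))/(1-u*t)^2‖ ≤ 2 := by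
    intro t ht
    have hD := Dpos hu0 hu1 ht.1 ht.2
    rw [Real.norm_eq_abs, abs_div, abs_of_nonneg (a := (1-u*t)^2) (by positivity)]
    rw [div_le_iff₀ (by positivity)]
    rw [abs_le]
    have e1 : 1 - t ≤ 1 - u*t := by nlinarith [ht.1, ht.2]
    have e2 : (0:ℝ) ≤ 1 - t := by linarith [ht.2]
    have e3 : (1-t)*(1-t) ≤ (1-u*t)*(1-u*t) := mul_le_mul e1 e1 e2 (by linarith)
    have e4 : u*(1-t)^2 ≤ (1-u*t)^2 := by nlinarith [e3]
    have e5 : 2*(1-t)*(1-u*t) ≤ 2*(1-u*t)^2 := by nlinarith [mul_le_mul_of_nonneg_right e1 hD.le]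
    constructor <;> nlinarith [e4, e5, mul_nonneg e2 hD.le, mul_nonneg hu0 (sq_nonneg (1-t))]
  have := (convex_Ico (0:ℝ) 1).norm_image_sub_le_of_norm_hasDerivWithin_le
    hderiv hbound hv' hv
  simpa [Real.norm_eq_abs] using this

lemma hf_lip {u v u' v' : ℝ} (hu0 : 0 ≤ u) (hu1 : u < 1) (hv0 : 0 ≤ v) (hv1 : v < 1)
    (hu0' : 0 ≤ u') (hu1' : u' < 1) (hv0' : 0 ≤ v') (hv1' : v' < 1) :
    |hf u v - hf u' v'| ≤ |u - u'| + 2 * |v - v'| := by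
  have t1 := hf_lip_u hu0 hu1 hu0' hu1' hv0 hv1
  have t2 := hf_lip_v hu0' hu1' (mem_Ico.2 ⟨hv0, hv1⟩) (mem_Ico.2 ⟨hv0', hv1'⟩)
  calc |hf u v - hf u' v'| ≤ |hf u v - hf u' v| + |hf u' v - hf u' v'| := abs_sub_le _ _ _
    _ ≤ |u - u'| + 2 * |v - v'| := by linarith

lemma Af_lip {u v u' v' : ℝ} (hu0 : 0 ≤ u) (hu1 : u < 1) (hv0 : 0 ≤ v) (hv1 : v < 1)
    (hu0' : 0 ≤ u') (hu1' : u' < 1) (hv0' : 0 ≤ v') (hv1' : v' < 1) :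
    |Af u v - Af u' v'| ≤ |u - u'| + |v - v'| := by
  have := hf_lip hu0 hu1 hv0 hv1 hu0' hu1' hv0' hv1'
  have h : Af u v - Af u' v' = (hf u v - hf u' v')/2 := by rw [Af, Af]; ring
  rw [h, abs_div]
  rw [abs_of_nonneg (by norm_num : (0:ℝ) ≤ 2)]
  linarith [abs_nonneg (u-u'), abs_nonneg (v-v')]

lemma sqrt_lip {a b : ℝ} (ha : 1/2 ≤ a) (hb : 1/2 ≤ b) :
    |Real.sqrt a - Real.sqrt b| ≤ |a - b| := by
  have ha0 : (0:ℝ) ≤ a := by linarith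
  have hb0 : (0:ℝ) ≤ b := by linarith
  have hq : Real.sqrt (1/4) = 1/2 := by
    rw [show (1/4:ℝ) = (1/2)^2 by norm_num, Real.sqrt_sq (by norm_num : (0:ℝ) ≤ 1/2)]
  have hsum : 1 ≤ Real.sqrt a + Real.sqrt b := by
    have h1 : Real.sqrt (1/4) ≤ Real.sqrt a := Real.sqrt_le_sqrt (by linarith)
    have h2 : Real.sqrt (1/4) ≤ Real.sqrt b := Real.sqrt_le_sqrt (by linarith)
    rw [hq] at h1 h2
    linarith
  have key : (Real.sqrt a - Real.sqrt b) * (Real.sqrt a + Real.sqrt b) = a - b := by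
    have sa := Real.sq_sqrt ha0
    have sb := Real.sq_sqrt hb0
    linear_combination sa - sb
  have habs : |Real.sqrt a - Real.sqrt b| * (Real.sqrt a + Real.sqrt b) = |a - b| := by
    rw [← key, abs_mul, abs_of_nonneg (by linarith : (0:ℝ) ≤ Real.sqrt a + Real.sqrt b)]
  nlinarith [abs_nonneg (Real.sqrt a - Real.sqrt b)]

lemma inv_sqrt_lip {a b : ℝ} (ha : 1/2 ≤ a) (hb : 1/2 ≤ b) :
    |1/Real.sqrt a - 1/Real.sqrt b| ≤ 2 * |a - b| := by
  have ha' : (0:ℝ) < Real.sqrt a := Real.sqrt_pos.2 (by linarith)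
  have hb' : (0:ℝ) < Real.sqrt b := Real.sqrt_pos.2 (by linarith)
  have ha0 : (0:ℝ) ≤ a := by linarith
  have hprod : 1/2 ≤ Real.sqrt a * Real.sqrt b := by
    rw [← Real.sqrt_mul ha0]
    have hq : Real.sqrt (1/4) = 1/2 := by
      rw [show (1/4:ℝ) = (1/2)^2 by norm_num, Real.sqrt_sq (by norm_num : (0:ℝ) ≤ 1/2)]
    rw [← hq]
    exact Real.sqrt_le_sqrt (by nlinarith)
  have key : 1/Real.sqrt a - 1/Real.sqrt b = (Real.sqrt b - Real.sqrt a)/(Real.sqrt a * Real.sqrt b) := by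
    field_simp
  rw [key, abs_div, abs_of_nonneg (by positivity : (0:ℝ) ≤ Real.sqrt a * Real.sqrt b)]
  rw [div_le_iff₀ (by positivity)]
  have := sqrt_lip hb ha
  have h2 : |b - a| = |a - b| := abs_sub_comm b a
  nlinarith [abs_nonneg (a-b)]


/-- two-dimensional norm is 1-Lipschitz w.r.t. ℓ¹ -/
lemma sqrt_sq_add_sq_lip (x y x' y' : ℝ) :
    |Real.sqrt (x^2+y^2) - Real.sqrt (x'^2+y'^2)| ≤ |x-x'| + |y-y'| := by
  set s := Real.sqrt (x^2+y^2) with hs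
  set s' := Real.sqrt (x'^2+y'^2) with hs'
  have hs0 : 0 ≤ s := Real.sqrt_nonneg _
  have hs0' : 0 ≤ s' := Real.sqrt_nonneg _
  have hsq : s^2 = x^2+y^2 := Real.sq_sqrt (by positivity)
  have hsq' : s'^2 = x'^2+y'^2 := Real.sq_sqrt (by positivity)
  have hcs : x*x' + y*y' ≤ s*s' := by
    rcases le_or_gt (x*x'+y*y') 0 with h | h
    · exact h.trans (by positivity)
    · have h2 : (x*x'+y*y')^2 ≤ (s*s')^2 := by
        have : (x*x'+y*y')^2 ≤ (x^2+y^2)*(x'^2+y'^2) := by nlinarith [sq_nonneg (x*y'-y*x')]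
        calc (x*x'+y*y')^2 ≤ (x^2+y^2)*(x'^2+y'^2) := this
          _ = (s*s')^2 := by rw [mul_pow, hsq, hsq']
      nlinarith [mul_nonneg hs0 hs0']
  have h2 : (s-s')^2 ≤ (|x-x'|+|y-y'|)^2 := by
    have e1 : |x-x'|^2 = (x-x')^2 := sq_abs _
    have e2 : |y-y'|^2 = (y-y')^2 := sq_abs _
    nlinarith [hcs, mul_nonneg (abs_nonneg (x-x')) (abs_nonneg (y-y')),
      sq_abs (x-x'), sq_abs (y-y')]
  have hB : 0 ≤ |x-x'|+|y-y'| := by positivity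
  nlinarith [sq_abs (s-s'), abs_nonneg (s-s')]

/-- the radical in the inverse map -/
def Rf (P Q : ℝ) : ℝ := Real.sqrt (4*(1-P-Q)^2 + (2-P-Q)^2*(Q-P)^2)

/-- the sum a+b in the inverse map -/
def Sf (P Q : ℝ) : ℝ := (2*(1-P-Q) + Rf P Q)/(2-P-Q)

def uf (P Q : ℝ) : ℝ := 1 - (Sf P Q + (Q-P))/2
def vf (P Q : ℝ) : ℝ := 1 - (Sf P Q - (Q-P))/2

section
variable {P Q : ℝ} (hP : 0 ≤ P) (hQ : 0 ≤ Q) (hPQ : P + Q < 1)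

include hP hQ hPQ

lemma hRsq : (Rf P Q)^2 = 4*(1-P-Q)^2 + (2-P-Q)^2*(Q-P)^2 :=
  Real.sq_sqrt (by positivity)

lemma hRnn : 0 ≤ Rf P Q := Real.sqrt_nonneg _

lemma hR2W : 2*(1-P-Q) ≤ Rf P Q := by
  have h : Real.sqrt ((2*(1-P-Q))^2) ≤ Rf P Q := Real.sqrt_le_sqrt (by nlinarith [sq_nonneg ((2-P-Q)*(Q-P))])
  rwa [Real.sqrt_sq (by linarith)] at h

lemma hRle : Rf P Q ≤ 2 - (Q-P)*(2-P-Q) := by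
  have hW : 0 < 1-P-Q := by linarith
  have he : (Q-P)*(2-P-Q) ≤ 1 - (1-P-Q)^2 := by nlinarith
  have hpos : 0 ≤ 2 - (Q-P)*(2-P-Q) := by nlinarith
  have harg : 4*(1-P-Q)^2 + (2-P-Q)^2*(Q-P)^2 ≤ (2 - (Q-P)*(2-P-Q))^2 := by nlinarith
  calc Rf P Q ≤ Real.sqrt ((2 - (Q-P)*(2-P-Q))^2) := Real.sqrt_le_sqrt harg
    _ = 2 - (Q-P)*(2-P-Q) := Real.sqrt_sq hpos

lemma hS1 : Sf P Q * (2-P-Q) = 2*(1-P-Q) + Rf P Q := by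
  rw [Sf, div_mul_cancel₀]
  exact (by linarith : (0:ℝ) < 2-P-Q).ne' 

lemma hSpos : 0 < Sf P Q := by
  have := hRnn hP hQ hPQ
  have h2 : 0 < 2*(1-P-Q) + Rf P Q := by nlinarith
  exact div_pos h2 (by linarith)

lemma hkey : (2-P-Q)*((Sf P Q)^2 - (Q-P)^2) = 4*(1-P-Q)*(Sf P Q) := by
  have h1 := hS1 hP hQ hPQ
  have hR := hRsq hP hQ hPQ
  have h12 : 0 < 2-P-Q := by linarith
  have h4 : (2-P-Q)^2*((Sf P Q)^2-(Q-P)^2) = 4*(1-P-Q)*(2*(1-P-Q)+Rf P Q) := by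
    have h3 : (Sf P Q*(2-P-Q))^2 = (2*(1-P-Q) + Rf P Q)^2 := by rw [h1]
    linear_combination h3 + hR
  have h5 : (2-P-Q)*((2-P-Q)*((Sf P Q)^2 - (Q-P)^2)) = (2-P-Q)*(4*(1-P-Q)*(Sf P Q)) := by
    linear_combination h4 - 4*(1-P-Q)*h1
  exact mul_left_cancel₀ h12.ne' h5

lemma habe : |Q-P| < Sf P Q := by
  have hk := hkey hP hQ hPQ
  have hS := hSpos hP hQ hPQ
  have h2 : 0 < (Sf P Q)^2 - (Q-P)^2 := by nlinarith
  have := abs_nonneg (Q-P)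
  nlinarith [sq_abs (Q-P)]

lemma huf0 : 0 ≤ uf P Q := by
  have h := hRle hP hQ hPQ
  have hS1' := hS1 hP hQ hPQ
  have h12 : 0 < 2-P-Q := by linarith
  rw [uf]
  have h2 : (Sf P Q + (Q-P))*(2-P-Q) ≤ 2*(2-P-Q) := by nlinarith [hS1', h]
  have h3 : Sf P Q + (Q-P) ≤ 2 := le_of_mul_le_mul_right h2 h12
  linarith

lemma hvf0 : 0 ≤ vf P Q := by
  have h := hRle hQ hP (by linarith : Q + P < 1)
  have hS1' := hS1 hP hQ hPQ
  have h12 : 0 < 2-P-Q := by linarith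
  have hRPQ : Rf Q P = Rf P Q := by rw [Rf, Rf]; ring_nf
  rw [vf]
  have hRle' : Rf P Q ≤ 2 - (P-Q)*(2-P-Q) := by
    rw [← hRPQ]
    calc Rf Q P ≤ 2 - (P-Q)*(2-Q-P) := h
      _ = 2 - (P-Q)*(2-P-Q) := by ring
  have h2 : (Sf P Q - (Q-P))*(2-P-Q) ≤ 2*(2-P-Q) := by nlinarith [hS1', hRle']
  have h3 : Sf P Q - (Q-P) ≤ 2 := le_of_mul_le_mul_right h2 h12
  linarith

lemma huf1 : uf P Q < 1 := by
  have h := habe hP hQ hPQ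
  rw [uf]
  have := neg_abs_le (Q-P)
  have : -(Q-P) < Sf P Q := by nlinarith [neg_abs_le (Q-P)]
  linarith

lemma hvf1 : vf P Q < 1 := by
  have h := habe hP hQ hPQ
  rw [vf]
  have : (Q-P) < Sf P Q := by nlinarith [le_abs_self (Q-P)]
  linarith

end

section
variable {P Q : ℝ} (hP : 0 ≤ P) (hQ : 0 ≤ Q) (hPQ : P + Q < 1)
include hP hQ hPQ

/-- f ∘ g = id, scalar content -/
lemma round_fg : uf P Q * Af (uf P Q) (vf P Q) = P ∧ vf P Q * Af (vf P Q) (uf P Q) = Q := by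
  have hu0 := huf0 hP hQ hPQ
  have hu1 := huf1 hP hQ hPQ
  have hv0 := hvf0 hP hQ hPQ
  have hv1 := hvf1 hP hQ hPQ
  have hdiff := diff_eq hu0 hu1 hv0 hv1
  have huv : uf P Q - vf P Q = P - Q := by rw [uf, vf]; ring
  have hsum := sum_eq hu0 hu1 hv0 hv1
  have hkey' := hkey hP hQ hPQ
  have hD := Dpos hu0 hu1 hv0 hv1
  have hfrac : uf P Q + vf P Q - 2*(uf P Q * vf P Q) = (P+Q)*(1 - uf P Q * vf P Q) := by
    simp only [uf, vf]
    linear_combination (-1/4 : ℝ) * hkey'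
  have hsum2 : uf P Q * Af (uf P Q) (vf P Q) + vf P Q * Af (vf P Q) (uf P Q) = P + Q := by
    rw [hsum, hfrac, mul_div_assoc, div_self hD.ne', mul_one]
  constructor <;> linarith

/-- g maps into the open product square -/
lemma round_mem : 0 ≤ uf P Q ∧ uf P Q < 1 ∧ 0 ≤ vf P Q ∧ vf P Q < 1 :=
  ⟨huf0 hP hQ hPQ, huf1 hP hQ hPQ, hvf0 hP hQ hPQ, hvf1 hP hQ hPQ⟩

end

section
variable {u v : ℝ} (hu0 : 0 ≤ u) (hu1 : u < 1) (hv0 : 0 ≤ v) (hv1 : v < 1)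
include hu0 hu1 hv0 hv1

/-- g ∘ f = id, scalar content -/
lemma round_gf : uf (u * Af u v) (v * Af v u) = u ∧ vf (u * Af u v) (v * Af v u) = v := by
  set P := u * Af u v with hPdef
  set Q := v * Af v u with hQdef
  have hP : 0 ≤ P := mul_nonneg hu0 (Af_pos hu0 hu1 hv0 hv1).le
  have hQ : 0 ≤ Q := mul_nonneg hv0 (Af_pos hv0 hv1 hu0 hu1).le
  have hPQ : P + Q < 1 := sum_lt hu0 hu1 hv0 hv1
  have hD := Dpos hu0 hu1 hv0 hv1
  have he' : P - Q = u - v := diff_eq hu0 hu1 hv0 hv1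
  have hsum := sum_eq hu0 hu1 hv0 hv1
  have hs' : (P+Q)*(1-u*v) = u + v - 2*(u*v) := by
    rw [hPdef, hQdef, hsum, div_mul_cancel₀ _ hD.ne']
  have hWuv : (1-P-Q)*(1-u*v) = (1-u)*(1-v) := by linear_combination (-1 : ℝ)*hs'
  set X := (2-P-Q)*((1-u)+(1-v)) - 2*(1-P-Q) with hXdef
  have hX : X*(1-u*v) = (1-u)^2+(1-v)^2 := by
    rw [hXdef]; linear_combination (-u-v)*hWuv
  have hXnn : 0 ≤ X := by nlinarith [hX, hD, sq_nonneg (1-u), sq_nonneg (1-v)]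
  have hXsq : X^2 = 4*(1-P-Q)^2 + (2-P-Q)^2*(Q-P)^2 := by
    rw [hXdef]; linear_combination (-4*(2-P-Q))*hWuv + ((2-P-Q)^2*(v-u+Q-P))*he'
  have hRval : Rf P Q = X := by
    rw [Rf, ← hXsq, Real.sqrt_sq hXnn]
  have hSval : Sf P Q = (1-u)+(1-v) := by
    have h2 : (0:ℝ) < 2 - P - Q := by linarith
    rw [Sf, hRval, hXdef]
    rw [show 2*(1-P-Q) + ((2-P-Q)*((1-u)+(1-v)) - 2*(1-P-Q)) = (2-P-Q)*((1-u)+(1-v)) by ring,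
      mul_comm, mul_div_assoc, div_self h2.ne', mul_one]
  constructor
  · rw [uf, hSval]; linear_combination (1/2 : ℝ)*he'
  · rw [vf, hSval]; linear_combination (-1/2 : ℝ)*he'

end

/-- forward coefficient is Lipschitz -/
lemma fcoef_lip {u v u' v' : ℝ} (hu0 : 0 ≤ u) (hu1 : u < 1) (hv0 : 0 ≤ v) (hv1 : v < 1)
    (hu0' : 0 ≤ u') (hu1' : u' < 1) (hv0' : 0 ≤ v') (hv1' : v' < 1) :
    |Real.sqrt (Af u v) - Real.sqrt (Af u' v')| ≤ |u - u'| + |v - v'| :=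
  le_trans (sqrt_lip (Af_ge hu0 hu1 hv0 hv1) (Af_ge hu0' hu1' hv0' hv1'))
    (Af_lip hu0 hu1 hv0 hv1 hu0' hu1' hv0' hv1')

lemma abs_sub'' (a b : ℝ) : |a - b| ≤ |a| + |b| := by
  rw [sub_eq_add_neg]
  exact le_trans (abs_add_le _ _) (by rw [abs_neg])

lemma Rf_eq (P Q : ℝ) : Rf P Q = Real.sqrt ((2*(1-P-Q))^2 + ((2-P-Q)*(Q-P))^2) := by
  rw [Rf]; congr 1; ring

lemma Rf_le3 {P Q : ℝ} (hP : 0 ≤ P) (hQ : 0 ≤ Q) (hPQ : P + Q < 1) : Rf P Q ≤ 3 := by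
  have harg : 4*(1-P-Q)^2 + (2-P-Q)^2*(Q-P)^2 ≤ 9 := by
    have h1 : (1-P-Q)^2 ≤ 1 := by nlinarith
    have h2 : (2-P-Q)^2 ≤ 4 := by nlinarith
    have h3 : (Q-P)^2 ≤ 1 := by nlinarith
    nlinarith [sq_nonneg (2-P-Q), sq_nonneg (Q-P)]
  calc Rf P Q ≤ Real.sqrt 9 := Real.sqrt_le_sqrt harg
    _ = 3 := by rw [show (9:ℝ) = 3^2 by norm_num, Real.sqrt_sq (by norm_num : (0:ℝ) ≤ 3)]

section
variable {P Q P' Q' : ℝ} (hP : 0 ≤ P) (hQ : 0 ≤ Q) (hPQ : P + Q < 1)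
  (hP' : 0 ≤ P') (hQ' : 0 ≤ Q') (hPQ' : P' + Q' < 1)
include hP hQ hPQ hP' hQ' hPQ'

lemma Rf_lip : |Rf P Q - Rf P' Q'| ≤ 5*(|P-P'| + |Q-Q'|) := by
  rw [Rf_eq, Rf_eq]
  have h := sqrt_sq_add_sq_lip (2*(1-P-Q)) ((2-P-Q)*(Q-P)) (2*(1-P'-Q')) ((2-P'-Q')*(Q'-P'))
  have e1 : |2*(1-P-Q) - 2*(1-P'-Q')| ≤ 2*(|P-P'|+|Q-Q'|) := by
    rw [show 2*(1-P-Q) - 2*(1-P'-Q') = (-2)*(P-P') + (-2)*(Q-Q') by ring]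
    refine le_trans (abs_add_le _ _) ?_
    rw [abs_mul, abs_mul]
    rw [show |(-2:ℝ)| = 2 by norm_num]
    linarith
  have e2 : |(2-P-Q)*(Q-P) - (2-P'-Q')*(Q'-P')| ≤ 3*(|P-P'|+|Q-Q'|) := by
    have hd : (2-P-Q)*(Q-P) - (2-P'-Q')*(Q'-P')
        = (2-P-Q)*((Q-Q') - (P-P')) + (Q'-P')*(-(P-P') - (Q-Q')) := by ring
    rw [hd]
    have b1 : |(2-P-Q)*((Q-Q') - (P-P'))| ≤ 2*(|P-P'| + |Q-Q'|) := by
      rw [abs_mul]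
      have h1 : |2-P-Q| ≤ 2 := by rw [abs_le]; constructor <;> linarith
      have h2 : |(Q-Q') - (P-P')| ≤ |P-P'| + |Q-Q'| := by
        refine le_trans (abs_sub'' _ _) ?_; linarith
      exact mul_le_mul h1 h2 (abs_nonneg _) (by norm_num)
    have b2 : |(Q'-P')*(-(P-P') - (Q-Q'))| ≤ 1*(|P-P'| + |Q-Q'|) := by
      rw [abs_mul]
      have h1 : |Q'-P'| ≤ 1 := by rw [abs_le]; constructor <;> linarith
      have h2 : |-(P-P') - (Q-Q')| ≤ |P-P'| + |Q-Q'| := by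
        refine le_trans (abs_sub'' _ _) ?_; rw [abs_neg]
      exact mul_le_mul h1 h2 (abs_nonneg _) (by norm_num)
    refine le_trans (abs_add_le _ _) ?_
    linarith
  linarith

lemma Sf_lip : |Sf P Q - Sf P' Q'| ≤ 20*(|P-P'| + |Q-Q'|) := by
  have d1 : (0:ℝ) < 2-P-Q := by linarith
  have d2 : (0:ℝ) < 2-P'-Q' := by linarith
  have hRl := Rf_lip hP hQ hPQ hP' hQ' hPQ'
  have hR3 := Rf_le3 hP' hQ' hPQ'
  have hRn : 0 ≤ Rf P' Q' := Real.sqrt_nonneg _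
  set N : ℝ := (2*(1-P-Q) + Rf P Q)*(2-P'-Q') - (2*(1-P'-Q') + Rf P' Q')*(2-P-Q) with hN
  have hSd : Sf P Q - Sf P' Q' = N/((2-P-Q)*(2-P'-Q')) := by
    rw [Sf, Sf, div_sub_div _ _ d1.ne' d2.ne', hN]
    congr 1
    ring
  have hNb : |N| ≤ 20*(|P-P'| + |Q-Q'|) := by
    have hsplit : N = (2-P'-Q')*((2*(1-P-Q) - 2*(1-P'-Q')) + (Rf P Q - Rf P' Q'))
        + (2*(1-P'-Q') + Rf P' Q')*((2-P'-Q') - (2-P-Q)) := by rw [hN]; ring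
    rw [hsplit]
    have e1 : |2*(1-P-Q) - 2*(1-P'-Q')| ≤ 2*(|P-P'|+|Q-Q'|) := by
      rw [show 2*(1-P-Q) - 2*(1-P'-Q') = (-2)*(P-P') + (-2)*(Q-Q') by ring]
      refine le_trans (abs_add_le _ _) ?_
      rw [abs_mul, abs_mul, show |(-2:ℝ)| = 2 by norm_num]
      linarith
    have b1 : |(2-P'-Q')*((2*(1-P-Q) - 2*(1-P'-Q')) + (Rf P Q - Rf P' Q'))|
        ≤ 14*(|P-P'|+|Q-Q'|) := by
      rw [abs_mul]
      have h1 : |2-P'-Q'| ≤ 2 := by rw [abs_le]; constructor <;> linarith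
      have h2 : |(2*(1-P-Q) - 2*(1-P'-Q')) + (Rf P Q - Rf P' Q')| ≤ 7*(|P-P'|+|Q-Q'|) := by
        refine le_trans (abs_add_le _ _) ?_; linarith
      refine le_trans (mul_le_mul h1 h2 (abs_nonneg _) (by norm_num)) (le_of_eq (by ring))
    have b2 : |(2*(1-P'-Q') + Rf P' Q')*((2-P'-Q') - (2-P-Q))| ≤ 5*(|P-P'|+|Q-Q'|) := by
      rw [abs_mul]
      have h1 : |2*(1-P'-Q') + Rf P' Q'| ≤ 5 := by rw [abs_le]; constructor <;> linarith
      have h2 : |(2-P'-Q') - (2-P-Q)| ≤ |P-P'|+|Q-Q'| := by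
        rw [show (2-P'-Q') - (2-P-Q) = (P-P') + (Q-Q') by ring]
        exact abs_add_le _ _
      exact mul_le_mul h1 h2 (abs_nonneg _) (by norm_num)
    refine le_trans (abs_add_le _ _) ?_
    linarith [abs_nonneg (P-P'), abs_nonneg (Q-Q')]
  rw [hSd, abs_div]
  have hd : (1:ℝ) ≤ |(2-P-Q)*(2-P'-Q')| := by
    rw [abs_of_pos (mul_pos d1 d2)]; nlinarith
  calc |N| / |(2-P-Q)*(2-P'-Q')| ≤ |N| := div_le_self (abs_nonneg N) hd
    _ ≤ 20*(|P-P'| + |Q-Q'|) := hNb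

lemma uf_lip : |uf P Q - uf P' Q'| ≤ 11*(|P-P'| + |Q-Q'|) := by
  have hS := Sf_lip hP hQ hPQ hP' hQ' hPQ'
  have e : uf P Q - uf P' Q' = ((-(Sf P Q - Sf P' Q') + (P - P')) - (Q - Q'))/2 := by
    rw [uf, uf]; ring
  rw [e, abs_div, show |(2:ℝ)| = 2 by norm_num, div_le_iff₀ (by norm_num : (0:ℝ) < 2)]
  have n1 := abs_sub'' (-(Sf P Q - Sf P' Q') + (P - P')) (Q - Q')
  have n2 : |-(Sf P Q - Sf P' Q') + (P-P')| ≤ |Sf P Q - Sf P' Q'| + |P-P'| := by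
    refine le_trans (abs_add_le _ _) ?_; rw [abs_neg]
  linarith [abs_nonneg (P-P'), abs_nonneg (Q-Q')]

lemma vf_lip : |vf P Q - vf P' Q'| ≤ 11*(|P-P'| + |Q-Q'|) := by
  have hS := Sf_lip hP hQ hPQ hP' hQ' hPQ'
  have e : vf P Q - vf P' Q' = ((-(Sf P Q - Sf P' Q') - (P - P')) + (Q - Q'))/2 := by
    rw [vf, vf]; ring
  rw [e, abs_div, show |(2:ℝ)| = 2 by norm_num, div_le_iff₀ (by norm_num : (0:ℝ) < 2)]
  have n1 := abs_add_le (-(Sf P Q - Sf P' Q') - (P - P')) (Q - Q')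
  have n2 : |-(Sf P Q - Sf P' Q') - (P-P')| ≤ |Sf P Q - Sf P' Q'| + |P-P'| := by
    refine le_trans (abs_sub'' _ _) ?_; rw [abs_neg]
  linarith [abs_nonneg (P-P'), abs_nonneg (Q-Q')]

/-- the inverse coefficient is Lipschitz -/
lemma gcoef_lip : |1/Real.sqrt (Af (uf P Q) (vf P Q)) - 1/Real.sqrt (Af (uf P' Q') (vf P' Q'))|
    ≤ 50*(|P-P'| + |Q-Q'|) := by
  obtain ⟨hu0, hu1, hv0, hv1⟩ := round_mem hP hQ hPQ
  obtain ⟨hu0', hu1', hv0', hv1'⟩ := round_mem hP' hQ' hPQ'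
  have h1 := inv_sqrt_lip (Af_ge hu0 hu1 hv0 hv1) (Af_ge hu0' hu1' hv0' hv1')
  have h2 := Af_lip hu0 hu1 hv0 hv1 hu0' hu1' hv0' hv1'
  have h3 := uf_lip hP hQ hPQ hP' hQ' hPQ'
  have h4 := vf_lip hP hQ hPQ hP' hQ' hPQ'
  calc |1/Real.sqrt (Af (uf P Q) (vf P Q)) - 1/Real.sqrt (Af (uf P' Q') (vf P' Q'))|
      ≤ 2*|Af (uf P Q) (vf P Q) - Af (uf P' Q') (vf P' Q')| := h1
    _ ≤ 2*(|uf P Q - uf P' Q'| + |vf P Q - vf P' Q'|) := by linarith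
    _ ≤ 50*(|P-P'| + |Q-Q'|) := by linarith [abs_nonneg (P-P'), abs_nonneg (Q-Q')]

/-- the second inverse coefficient is Lipschitz -/
lemma gcoef_lip' : |1/Real.sqrt (Af (vf P Q) (uf P Q)) - 1/Real.sqrt (Af (vf P' Q') (uf P' Q'))|
    ≤ 50*(|P-P'| + |Q-Q'|) := by
  obtain ⟨hu0, hu1, hv0, hv1⟩ := round_mem hP hQ hPQ
  obtain ⟨hu0', hu1', hv0', hv1'⟩ := round_mem hP' hQ' hPQ'
  have h1 := inv_sqrt_lip (Af_ge hv0 hv1 hu0 hu1) (Af_ge hv0' hv1' hu0' hu1')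
  have h2 := Af_lip hv0 hv1 hu0 hu1 hv0' hv1' hu0' hu1'
  have h3 := uf_lip hP hQ hPQ hP' hQ' hPQ'
  have h4 := vf_lip hP hQ hPQ hP' hQ' hPQ'
  calc |1/Real.sqrt (Af (vf P Q) (uf P Q)) - 1/Real.sqrt (Af (vf P' Q') (uf P' Q'))|
      ≤ 2*|Af (vf P Q) (uf P Q) - Af (vf P' Q') (uf P' Q')| := h1
    _ ≤ 2*(|vf P Q - vf P' Q'| + |uf P Q - uf P' Q'|) := by linarith
    _ ≤ 50*(|P-P'| + |Q-Q'|) := by linarith [abs_nonneg (P-P'), abs_nonneg (Q-Q')]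

end

section Vec

variable {α β : Type*} [NormedAddCommGroup α] [InnerProductSpace ℝ α]
  [NormedAddCommGroup β] [InnerProductSpace ℝ β]

/-- the product of unit balls -/
def pb : Set (WithLp 2 (α × β)) :=
  {p | ‖(WithLp.equiv 2 (α × β) p).1‖ < 1 ∧ ‖(WithLp.equiv 2 (α × β) p).2‖ < 1}

/-- the forward map -/
def fmap (p : WithLp 2 (α × β)) : WithLp 2 (α × β) :=
  (WithLp.equiv 2 (α × β)).symm
    (Real.sqrt (Af (‖(WithLp.equiv 2 (α × β) p).1‖^2) (‖(WithLp.equiv 2 (α × β) p).2‖^2)) •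
       (WithLp.equiv 2 (α × β) p).1,
     Real.sqrt (Af (‖(WithLp.equiv 2 (α × β) p).2‖^2) (‖(WithLp.equiv 2 (α × β) p).1‖^2)) •
       (WithLp.equiv 2 (α × β) p).2)

/-- the inverse map -/
def gmap (q : WithLp 2 (α × β)) : WithLp 2 (α × β) :=
  (WithLp.equiv 2 (α × β)).symm
    ((1/Real.sqrt (Af (uf (‖(WithLp.equiv 2 (α × β) q).1‖^2) (‖(WithLp.equiv 2 (α × β) q).2‖^2))
                      (vf (‖(WithLp.equiv 2 (α × β) q).1‖^2) (‖(WithLp.equiv 2 (α × β) q).2‖^2)))) •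
       (WithLp.equiv 2 (α × β) q).1,
     (1/Real.sqrt (Af (vf (‖(WithLp.equiv 2 (α × β) q).1‖^2) (‖(WithLp.equiv 2 (α × β) q).2‖^2))
                      (uf (‖(WithLp.equiv 2 (α × β) q).1‖^2) (‖(WithLp.equiv 2 (α × β) q).2‖^2)))) •
       (WithLp.equiv 2 (α × β) q).2)

lemma fmap_fst (p : WithLp 2 (α × β)) :
    (WithLp.equiv 2 (α × β) (fmap p)).1 =
      Real.sqrt (Af (‖(WithLp.equiv 2 (α × β) p).1‖^2) (‖(WithLp.equiv 2 (α × β) p).2‖^2)) •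
       (WithLp.equiv 2 (α × β) p).1 := by
  rw [fmap, Equiv.apply_symm_apply]

lemma fmap_snd (p : WithLp 2 (α × β)) :
    (WithLp.equiv 2 (α × β) (fmap p)).2 =
      Real.sqrt (Af (‖(WithLp.equiv 2 (α × β) p).2‖^2) (‖(WithLp.equiv 2 (α × β) p).1‖^2)) •
       (WithLp.equiv 2 (α × β) p).2 := by
  rw [fmap, Equiv.apply_symm_apply]

lemma gmap_fst (q : WithLp 2 (α × β)) :
    (WithLp.equiv 2 (α × β) (gmap q)).1 =
      (1/Real.sqrt (Af (uf (‖(WithLp.equiv 2 (α × β) q).1‖^2) (‖(WithLp.equiv 2 (α × β) q).2‖^2))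
                      (vf (‖(WithLp.equiv 2 (α × β) q).1‖^2) (‖(WithLp.equiv 2 (α × β) q).2‖^2)))) •
       (WithLp.equiv 2 (α × β) q).1 := by
  rw [gmap, Equiv.apply_symm_apply]

lemma gmap_snd (q : WithLp 2 (α × β)) :
    (WithLp.equiv 2 (α × β) (gmap q)).2 =
      (1/Real.sqrt (Af (vf (‖(WithLp.equiv 2 (α × β) q).1‖^2) (‖(WithLp.equiv 2 (α × β) q).2‖^2))
                      (uf (‖(WithLp.equiv 2 (α × β) q).1‖^2) (‖(WithLp.equiv 2 (α × β) q).2‖^2)))) •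
       (WithLp.equiv 2 (α × β) q).2 := by
  rw [gmap, Equiv.apply_symm_apply]

lemma norm_sq_eq (p : WithLp 2 (α × β)) :
    ‖p‖^2 = ‖(WithLp.equiv 2 (α × β) p).1‖^2 + ‖(WithLp.equiv 2 (α × β) p).2‖^2 := by
  rw [WithLp.prod_norm_sq_eq_of_L2]
  rfl

lemma norm_smul_sq {γ : Type*} [NormedAddCommGroup γ] [InnerProductSpace ℝ γ]
    {c : ℝ} (hc : 0 ≤ c) (x : γ) : ‖Real.sqrt c • x‖^2 = c * ‖x‖^2 := by
  rw [norm_smul, mul_pow, Real.norm_eq_abs, sq_abs, Real.sq_sqrt hc]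

/-- squared norm is < 1 on the unit ball -/
lemma sq_lt_one_of_norm_lt_one {γ : Type*} [NormedAddCommGroup γ] {x : γ}
    (h : ‖x‖ < 1) : ‖x‖^2 < 1 := by nlinarith [norm_nonneg x]

lemma norm_lt_one_of_sq {γ : Type*} [NormedAddCommGroup γ] {x : γ}
    (h : ‖x‖^2 < 1) : ‖x‖ < 1 := by nlinarith [norm_nonneg x]

lemma fmap_mem {p : WithLp 2 (α × β)} (hp : p ∈ pb) :
    fmap p ∈ ball (0 : WithLp 2 (α × β)) 1 := by
  obtain ⟨h1, h2⟩ := hp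
  set u := ‖(WithLp.equiv 2 (α × β) p).1‖^2 with hu
  set v := ‖(WithLp.equiv 2 (α × β) p).2‖^2 with hv
  have hu0 : 0 ≤ u := sq_nonneg _
  have hv0 : 0 ≤ v := sq_nonneg _
  have hu1 : u < 1 := sq_lt_one_of_norm_lt_one h1
  have hv1 : v < 1 := sq_lt_one_of_norm_lt_one h2
  rw [mem_ball_zero_iff]
  apply norm_lt_one_of_sq
  rw [norm_sq_eq, fmap_fst, fmap_snd,
    norm_smul_sq (Af_pos hu0 hu1 hv0 hv1).le, norm_smul_sq (Af_pos hv0 hv1 hu0 hu1).le]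
  have := sum_lt hu0 hu1 hv0 hv1
  calc Af u v * u + Af v u * v = u * Af u v + v * Af v u := by ring
    _ < 1 := sum_lt hu0 hu1 hv0 hv1

lemma gmap_norms {q : WithLp 2 (α × β)} (hq : q ∈ ball (0 : WithLp 2 (α × β)) 1) :
    ‖(WithLp.equiv 2 (α × β) (gmap q)).1‖^2
        = uf (‖(WithLp.equiv 2 (α × β) q).1‖^2) (‖(WithLp.equiv 2 (α × β) q).2‖^2) ∧
    ‖(WithLp.equiv 2 (α × β) (gmap q)).2‖^2
        = vf (‖(WithLp.equiv 2 (α × β) q).1‖^2) (‖(WithLp.equiv 2 (α × β) q).2‖^2) := by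
  rw [mem_ball_zero_iff] at hq
  set P := ‖(WithLp.equiv 2 (α × β) q).1‖^2 with hP'
  set Q := ‖(WithLp.equiv 2 (α × β) q).2‖^2 with hQ'
  have hP : 0 ≤ P := sq_nonneg _
  have hQ : 0 ≤ Q := sq_nonneg _
  have hPQ : P + Q < 1 := by
    have h := norm_sq_eq q
    have := sq_lt_one_of_norm_lt_one hq
    rw [h] at this
    exact this
  obtain ⟨hu0, hu1, hv0, hv1⟩ := round_mem hP hQ hPQ
  obtain ⟨hrA, hrB⟩ := round_fg hP hQ hPQ
  have hA := Af_pos hu0 hu1 hv0 hv1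
  have hB := Af_pos hv0 hv1 hu0 hu1
  have hsA : 0 < Real.sqrt (Af (uf P Q) (vf P Q)) := Real.sqrt_pos.2 hA
  have hsB : 0 < Real.sqrt (Af (vf P Q) (uf P Q)) := Real.sqrt_pos.2 hB
  constructor
  · rw [gmap_fst, norm_smul, mul_pow, Real.norm_eq_abs, sq_abs]
    rw [div_pow, one_pow, Real.sq_sqrt hA.le]
    rw [show (‖(WithLp.equiv 2 (α × β) q).1‖^2 : ℝ) = P from rfl]
    field_simp
    linear_combination (-1 : ℝ)*hrA
  · rw [gmap_snd, norm_smul, mul_pow, Real.norm_eq_abs, sq_abs]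
    rw [div_pow, one_pow, Real.sq_sqrt hB.le]
    rw [show (‖(WithLp.equiv 2 (α × β) q).2‖^2 : ℝ) = Q from rfl]
    field_simp
    linear_combination (-1 : ℝ)*hrB

lemma gmap_mem {q : WithLp 2 (α × β)} (hq : q ∈ ball (0 : WithLp 2 (α × β)) 1) :
    gmap q ∈ (pb : Set (WithLp 2 (α × β))) := by
  obtain ⟨hgu, hgv⟩ := gmap_norms hq
  rw [mem_ball_zero_iff] at hq
  set P := ‖(WithLp.equiv 2 (α × β) q).1‖^2
  set Q := ‖(WithLp.equiv 2 (α × β) q).2‖^2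
  have hP : 0 ≤ P := sq_nonneg _
  have hQ : 0 ≤ Q := sq_nonneg _
  have hPQ : P + Q < 1 := by
    have h := norm_sq_eq q
    have := sq_lt_one_of_norm_lt_one hq
    rw [h] at this
    exact this
  obtain ⟨hu0, hu1, hv0, hv1⟩ := round_mem hP hQ hPQ
  exact ⟨norm_lt_one_of_sq (by rw [hgu]; exact hu1),
    norm_lt_one_of_sq (by rw [hgv]; exact hv1)⟩

lemma gmap_fmap {p : WithLp 2 (α × β)} (hp : p ∈ pb) : gmap (fmap p) = p := by
  obtain ⟨h1, h2⟩ := hp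
  set x := (WithLp.equiv 2 (α × β) p).1 with hx
  set y := (WithLp.equiv 2 (α × β) p).2 with hy
  set u := ‖x‖^2 with hu
  set v := ‖y‖^2 with hv
  have hu0 : 0 ≤ u := sq_nonneg _
  have hv0 : 0 ≤ v := sq_nonneg _
  have hu1 : u < 1 := sq_lt_one_of_norm_lt_one h1
  have hv1 : v < 1 := sq_lt_one_of_norm_lt_one h2
  have hA := Af_pos hu0 hu1 hv0 hv1
  have hB := Af_pos hv0 hv1 hu0 hu1
  have hXn : ‖(WithLp.equiv 2 (α × β) (fmap p)).1‖^2 = u * Af u v := by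
    rw [fmap_fst, norm_smul_sq hA.le]; ring
  have hYn : ‖(WithLp.equiv 2 (α × β) (fmap p)).2‖^2 = v * Af v u := by
    rw [fmap_snd, norm_smul_sq hB.le]; ring
  obtain ⟨hru, hrv⟩ := round_gf hu0 hu1 hv0 hv1
  have hsA : (0:ℝ) < Real.sqrt (Af u v) := Real.sqrt_pos.2 hA
  have hsB : (0:ℝ) < Real.sqrt (Af v u) := Real.sqrt_pos.2 hB
  apply (WithLp.equiv 2 (α × β)).injective
  have hgf : (WithLp.equiv 2 (α × β) (gmap (fmap p))) =
      ((1/Real.sqrt (Af u v)) • (WithLp.equiv 2 (α × β) (fmap p)).1,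
       (1/Real.sqrt (Af v u)) • (WithLp.equiv 2 (α × β) (fmap p)).2) := by
    rw [gmap, Equiv.apply_symm_apply, hXn, hYn, hru, hrv]
  rw [hgf, fmap_fst, fmap_snd]
  rw [smul_smul, smul_smul, one_div_mul_cancel hsA.ne', one_div_mul_cancel hsB.ne',
    one_smul, one_smul]

lemma fmap_gmap {q : WithLp 2 (α × β)} (hq : q ∈ ball (0 : WithLp 2 (α × β)) 1) :
    fmap (gmap q) = q := by
  obtain ⟨hgu, hgv⟩ := gmap_norms hq
  rw [mem_ball_zero_iff] at hq
  set P := ‖(WithLp.equiv 2 (α × β) q).1‖^2 with hP'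
  set Q := ‖(WithLp.equiv 2 (α × β) q).2‖^2 with hQ'
  have hP : 0 ≤ P := sq_nonneg _
  have hQ : 0 ≤ Q := sq_nonneg _
  have hPQ : P + Q < 1 := by
    have h := norm_sq_eq q
    have := sq_lt_one_of_norm_lt_one hq
    rw [h] at this
    exact this
  obtain ⟨hu0, hu1, hv0, hv1⟩ := round_mem hP hQ hPQ
  have hA := Af_pos hu0 hu1 hv0 hv1
  have hB := Af_pos hv0 hv1 hu0 hu1
  have hsA : (0:ℝ) < Real.sqrt (Af (uf P Q) (vf P Q)) := Real.sqrt_pos.2 hA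
  have hsB : (0:ℝ) < Real.sqrt (Af (vf P Q) (uf P Q)) := Real.sqrt_pos.2 hB
  apply (WithLp.equiv 2 (α × β)).injective
  have hfg : (WithLp.equiv 2 (α × β) (fmap (gmap q))) =
      (Real.sqrt (Af (uf P Q) (vf P Q)) • (WithLp.equiv 2 (α × β) (gmap q)).1,
       Real.sqrt (Af (vf P Q) (uf P Q)) • (WithLp.equiv 2 (α × β) (gmap q)).2) := by
    rw [fmap, Equiv.apply_symm_apply, hgu, hgv]
  rw [hfg, gmap_fst, gmap_snd]
  rw [smul_smul, smul_smul]
  rw [show (‖(WithLp.equiv 2 (α × β) q).1‖^2 : ℝ) = P from rfl,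
    show (‖(WithLp.equiv 2 (α × β) q).2‖^2 : ℝ) = Q from rfl]
  rw [mul_one_div, div_self hsA.ne', mul_one_div, div_self hsB.ne', one_smul, one_smul]

lemma proj1_contDiff : ContDiff ℝ (⊤ : ℕ∞) (fun p : WithLp 2 (α × β) => (WithLp.equiv 2 (α × β) p).1) :=
  (ContinuousLinearMap.fst ℝ α β).contDiff.comp
    (WithLp.prodContinuousLinearEquiv 2 ℝ α β).toContinuousLinearMap.contDiff

lemma proj2_contDiff : ContDiff ℝ (⊤ : ℕ∞) (fun p : WithLp 2 (α × β) => (WithLp.equiv 2 (α × β) p).2) :=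
  (ContinuousLinearMap.snd ℝ α β).contDiff.comp
    (WithLp.prodContinuousLinearEquiv 2 ℝ α β).toContinuousLinearMap.contDiff

lemma nsq1_contDiff : ContDiff ℝ (⊤ : ℕ∞) (fun p : WithLp 2 (α × β) => ‖(WithLp.equiv 2 (α × β) p).1‖^2) :=
  (contDiff_norm_sq ℝ).comp proj1_contDiff

lemma nsq2_contDiff : ContDiff ℝ (⊤ : ℕ∞) (fun p : WithLp 2 (α × β) => ‖(WithLp.equiv 2 (α × β) p).2‖^2) :=
  (contDiff_norm_sq ℝ).comp proj2_contDiff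

lemma fmap_contDiffOn : ContDiffOn ℝ (⊤ : ℕ∞) (fmap : WithLp 2 (α × β) → WithLp 2 (α × β)) pb := by
  intro p hp
  obtain ⟨h1, h2⟩ := hp
  have hu0 : (0:ℝ) ≤ ‖(WithLp.equiv 2 (α × β) p).1‖^2 := sq_nonneg _
  have hv0 : (0:ℝ) ≤ ‖(WithLp.equiv 2 (α × β) p).2‖^2 := sq_nonneg _
  have hu1 : ‖(WithLp.equiv 2 (α × β) p).1‖^2 < 1 := sq_lt_one_of_norm_lt_one h1
  have hv1 : ‖(WithLp.equiv 2 (α × β) p).2‖^2 < 1 := sq_lt_one_of_norm_lt_one h2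
  have hU : ContDiffAt ℝ (⊤ : ℕ∞) (fun r : WithLp 2 (α × β) => ‖(WithLp.equiv 2 (α × β) r).1‖^2) p :=
    nsq1_contDiff.contDiffAt
  have hV : ContDiffAt ℝ (⊤ : ℕ∞) (fun r : WithLp 2 (α × β) => ‖(WithLp.equiv 2 (α × β) r).2‖^2) p :=
    nsq2_contDiff.contDiffAt
  have hDen : (1:ℝ) - ‖(WithLp.equiv 2 (α × β) p).1‖^2 * ‖(WithLp.equiv 2 (α × β) p).2‖^2 ≠ 0 :=
    (Dpos hu0 hu1 hv0 hv1).ne'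
  have hA : ContDiffAt ℝ (⊤ : ℕ∞) (fun r : WithLp 2 (α × β) =>
      Af (‖(WithLp.equiv 2 (α × β) r).1‖^2) (‖(WithLp.equiv 2 (α × β) r).2‖^2)) p := by
    simp only [Af, hf]
    exact contDiffAt_const.add
      ((((contDiffAt_const.sub hV).pow 2).div (contDiffAt_const.sub (hU.mul hV)) hDen).div_const 2)
  have hB : ContDiffAt ℝ (⊤ : ℕ∞) (fun r : WithLp 2 (α × β) =>
      Af (‖(WithLp.equiv 2 (α × β) r).2‖^2) (‖(WithLp.equiv 2 (α × β) r).1‖^2)) p := by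
    simp only [Af, hf]
    have hDen' : (1:ℝ) - ‖(WithLp.equiv 2 (α × β) p).2‖^2 * ‖(WithLp.equiv 2 (α × β) p).1‖^2 ≠ 0 :=
      (Dpos hv0 hv1 hu0 hu1).ne'
    exact contDiffAt_const.add
      ((((contDiffAt_const.sub hU).pow 2).div (contDiffAt_const.sub (hV.mul hU)) hDen').div_const 2)
  have hsA : ContDiffAt ℝ (⊤ : ℕ∞) (fun r : WithLp 2 (α × β) =>
      Real.sqrt (Af (‖(WithLp.equiv 2 (α × β) r).1‖^2) (‖(WithLp.equiv 2 (α × β) r).2‖^2))) p :=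
    hA.sqrt (Af_pos hu0 hu1 hv0 hv1).ne'
  have hsB : ContDiffAt ℝ (⊤ : ℕ∞) (fun r : WithLp 2 (α × β) =>
      Real.sqrt (Af (‖(WithLp.equiv 2 (α × β) r).2‖^2) (‖(WithLp.equiv 2 (α × β) r).1‖^2))) p :=
    hB.sqrt (Af_pos hv0 hv1 hu0 hu1).ne'
  have hres : ContDiffAt ℝ (⊤ : ℕ∞) (fmap : WithLp 2 (α × β) → WithLp 2 (α × β)) p := by
    rw [show (fmap : WithLp 2 (α × β) → WithLp 2 (α × β)) = fun r => fmap r from rfl]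
    simp only [fmap]
    exact ((WithLp.prodContinuousLinearEquiv 2 ℝ α β).symm.toContinuousLinearMap.contDiff.contDiffAt).comp
      p ((hsA.smul proj1_contDiff.contDiffAt).prodMk (hsB.smul proj2_contDiff.contDiffAt))
  exact hres.contDiffWithinAt

lemma gmap_contDiffOn :
    ContDiffOn ℝ (⊤ : ℕ∞) (gmap : WithLp 2 (α × β) → WithLp 2 (α × β)) (ball 0 1) := by
  intro q hq
  have hqm := hq
  rw [mem_ball_zero_iff] at hqm
  have hP : (0:ℝ) ≤ ‖(WithLp.equiv 2 (α × β) q).1‖^2 := sq_nonneg _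
  have hQ : (0:ℝ) ≤ ‖(WithLp.equiv 2 (α × β) q).2‖^2 := sq_nonneg _
  have hPQ : ‖(WithLp.equiv 2 (α × β) q).1‖^2 + ‖(WithLp.equiv 2 (α × β) q).2‖^2 < 1 := by
    have h := norm_sq_eq q
    have := sq_lt_one_of_norm_lt_one hqm
    rw [h] at this
    exact this
  set P := ‖(WithLp.equiv 2 (α × β) q).1‖^2 with hPd
  set Q := ‖(WithLp.equiv 2 (α × β) q).2‖^2 with hQd
  obtain ⟨hu0, hu1, hv0, hv1⟩ := round_mem hP hQ hPQ
  have hU : ContDiffAt ℝ (⊤ : ℕ∞) (fun r : WithLp 2 (α × β) => ‖(WithLp.equiv 2 (α × β) r).1‖^2) q :=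
    nsq1_contDiff.contDiffAt
  have hV : ContDiffAt ℝ (⊤ : ℕ∞) (fun r : WithLp 2 (α × β) => ‖(WithLp.equiv 2 (α × β) r).2‖^2) q :=
    nsq2_contDiff.contDiffAt
  -- the radical
  have hargpos : (0:ℝ) < 4*(1-P-Q)^2 + (2-P-Q)^2*(Q-P)^2 := by
    have h0 : (0:ℝ) < 1-P-Q := by linarith
    have h1 : (0:ℝ) < (1-P-Q)^2 := by positivity
    nlinarith [sq_nonneg (2-P-Q), sq_nonneg (Q-P), mul_nonneg (sq_nonneg (2-P-Q)) (sq_nonneg (Q-P))]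
  have hRc : ContDiffAt ℝ (⊤ : ℕ∞) (fun r : WithLp 2 (α × β) =>
      Rf (‖(WithLp.equiv 2 (α × β) r).1‖^2) (‖(WithLp.equiv 2 (α × β) r).2‖^2)) q := by
    simp only [Rf]
    have harg : ContDiffAt ℝ (⊤ : ℕ∞) (fun r : WithLp 2 (α × β) =>
        4*(1-‖(WithLp.equiv 2 (α × β) r).1‖^2-‖(WithLp.equiv 2 (α × β) r).2‖^2)^2
        + (2-‖(WithLp.equiv 2 (α × β) r).1‖^2-‖(WithLp.equiv 2 (α × β) r).2‖^2)^2
          *(‖(WithLp.equiv 2 (α × β) r).2‖^2-‖(WithLp.equiv 2 (α × β) r).1‖^2)^2) q :=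
      (contDiffAt_const.mul (((contDiffAt_const.sub hU).sub hV).pow 2)).add
        ((((contDiffAt_const.sub hU).sub hV).pow 2).mul ((hV.sub hU).pow 2))
    exact harg.sqrt hargpos.ne' 
  have h2PQ : (2:ℝ)-P-Q ≠ 0 := by
    have : (0:ℝ) < 2-P-Q := by linarith
    exact this.ne'
  have hSc : ContDiffAt ℝ (⊤ : ℕ∞) (fun r : WithLp 2 (α × β) =>
      Sf (‖(WithLp.equiv 2 (α × β) r).1‖^2) (‖(WithLp.equiv 2 (α × β) r).2‖^2)) q := by
    simp only [Sf]
    exact ((contDiffAt_const.mul ((contDiffAt_const.sub hU).sub hV)).add hRc).div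
      ((contDiffAt_const.sub hU).sub hV) h2PQ
  have hufc : ContDiffAt ℝ (⊤ : ℕ∞) (fun r : WithLp 2 (α × β) =>
      uf (‖(WithLp.equiv 2 (α × β) r).1‖^2) (‖(WithLp.equiv 2 (α × β) r).2‖^2)) q := by
    simp only [uf]
    exact contDiffAt_const.sub ((hSc.add (hV.sub hU)).div_const 2)
  have hvfc : ContDiffAt ℝ (⊤ : ℕ∞) (fun r : WithLp 2 (α × β) =>
      vf (‖(WithLp.equiv 2 (α × β) r).1‖^2) (‖(WithLp.equiv 2 (α × β) r).2‖^2)) q := by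
    simp only [vf]
    exact contDiffAt_const.sub ((hSc.sub (hV.sub hU)).div_const 2)
  have hDen : (1:ℝ) - uf P Q * vf P Q ≠ 0 := (Dpos hu0 hu1 hv0 hv1).ne'
  have hDen' : (1:ℝ) - vf P Q * uf P Q ≠ 0 := (Dpos hv0 hv1 hu0 hu1).ne'
  have hAc : ContDiffAt ℝ (⊤ : ℕ∞) (fun r : WithLp 2 (α × β) =>
      Af (uf (‖(WithLp.equiv 2 (α × β) r).1‖^2) (‖(WithLp.equiv 2 (α × β) r).2‖^2))
         (vf (‖(WithLp.equiv 2 (α × β) r).1‖^2) (‖(WithLp.equiv 2 (α × β) r).2‖^2))) q := by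
    simp only [Af, hf]
    exact contDiffAt_const.add
      ((((contDiffAt_const.sub hvfc).pow 2).div (contDiffAt_const.sub (hufc.mul hvfc)) hDen).div_const 2)
  have hBc : ContDiffAt ℝ (⊤ : ℕ∞) (fun r : WithLp 2 (α × β) =>
      Af (vf (‖(WithLp.equiv 2 (α × β) r).1‖^2) (‖(WithLp.equiv 2 (α × β) r).2‖^2))
         (uf (‖(WithLp.equiv 2 (α × β) r).1‖^2) (‖(WithLp.equiv 2 (α × β) r).2‖^2))) q := by
    simp only [Af, hf]
    exact contDiffAt_const.add
      ((((contDiffAt_const.sub hufc).pow 2).div (contDiffAt_const.sub (hvfc.mul hufc)) hDen').div_const 2)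
  have hc1 : ContDiffAt ℝ (⊤ : ℕ∞) (fun r : WithLp 2 (α × β) =>
      1/Real.sqrt (Af (uf (‖(WithLp.equiv 2 (α × β) r).1‖^2) (‖(WithLp.equiv 2 (α × β) r).2‖^2))
         (vf (‖(WithLp.equiv 2 (α × β) r).1‖^2) (‖(WithLp.equiv 2 (α × β) r).2‖^2)))) q := by
    apply ContDiffAt.div contDiffAt_const (hAc.sqrt (Af_pos hu0 hu1 hv0 hv1).ne')
    exact (Real.sqrt_pos.2 (Af_pos hu0 hu1 hv0 hv1)).ne'
  have hc2 : ContDiffAt ℝ (⊤ : ℕ∞) (fun r : WithLp 2 (α × β) =>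
      1/Real.sqrt (Af (vf (‖(WithLp.equiv 2 (α × β) r).1‖^2) (‖(WithLp.equiv 2 (α × β) r).2‖^2))
         (uf (‖(WithLp.equiv 2 (α × β) r).1‖^2) (‖(WithLp.equiv 2 (α × β) r).2‖^2)))) q := by
    apply ContDiffAt.div contDiffAt_const (hBc.sqrt (Af_pos hv0 hv1 hu0 hu1).ne')
    exact (Real.sqrt_pos.2 (Af_pos hv0 hv1 hu0 hu1)).ne'
  have hres : ContDiffAt ℝ (⊤ : ℕ∞) (gmap : WithLp 2 (α × β) → WithLp 2 (α × β)) q := by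
    rw [show (gmap : WithLp 2 (α × β) → WithLp 2 (α × β)) = fun r => gmap r from rfl]
    simp only [gmap]
    exact ((WithLp.prodContinuousLinearEquiv 2 ℝ α β).symm.toContinuousLinearMap.contDiff.contDiffAt).comp
      q ((hc1.smul proj1_contDiff.contDiffAt).prodMk (hc2.smul proj2_contDiff.contDiffAt))
  exact hres.contDiffWithinAt

lemma norm_fst_le (p : WithLp 2 (α × β)) : ‖(WithLp.equiv 2 (α × β) p).1‖ ≤ ‖p‖ := by
  have h := norm_sq_eq p
  nlinarith [norm_nonneg p, norm_nonneg (WithLp.equiv 2 (α × β) p).1, sq_nonneg ‖(WithLp.equiv 2 (α × β) p).2‖]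

lemma norm_snd_le (p : WithLp 2 (α × β)) : ‖(WithLp.equiv 2 (α × β) p).2‖ ≤ ‖p‖ := by
  have h := norm_sq_eq p
  nlinarith [norm_nonneg p, norm_nonneg (WithLp.equiv 2 (α × β) p).2, sq_nonneg ‖(WithLp.equiv 2 (α × β) p).1‖]

lemma norm_le_add (z : WithLp 2 (α × β)) :
    ‖z‖ ≤ ‖(WithLp.equiv 2 (α × β) z).1‖ + ‖(WithLp.equiv 2 (α × β) z).2‖ := by
  have h := norm_sq_eq z
  nlinarith [norm_nonneg z, norm_nonneg (WithLp.equiv 2 (α × β) z).1,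
    norm_nonneg (WithLp.equiv 2 (α × β) z).2,
    mul_nonneg (norm_nonneg (WithLp.equiv 2 (α × β) z).1) (norm_nonneg (WithLp.equiv 2 (α × β) z).2)]

lemma equiv_sub_fst (a b : WithLp 2 (α × β)) :
    (WithLp.equiv 2 (α × β) (a - b)).1
      = (WithLp.equiv 2 (α × β) a).1 - (WithLp.equiv 2 (α × β) b).1 := rfl

lemma equiv_sub_snd (a b : WithLp 2 (α × β)) :
    (WithLp.equiv 2 (α × β) (a - b)).2
      = (WithLp.equiv 2 (α × β) a).2 - (WithLp.equiv 2 (α × β) b).2 := rfl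

lemma normsq_lip {γ : Type*} [NormedAddCommGroup γ] {x x' : γ}
    (hx : ‖x‖ ≤ 1) (hx' : ‖x'‖ ≤ 1) : |‖x‖^2 - ‖x'‖^2| ≤ 2*‖x - x'‖ := by
  have h1 : |‖x‖ - ‖x'‖| ≤ ‖x - x'‖ := abs_norm_sub_norm_le x x'
  have h2 : ‖x‖^2 - ‖x'‖^2 = (‖x‖ + ‖x'‖)*(‖x‖ - ‖x'‖) := by ring
  rw [h2, abs_mul]
  have h3 : |‖x‖ + ‖x'‖| ≤ 2 := by
    rw [abs_of_nonneg (by positivity)]; linarith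
  calc |‖x‖ + ‖x'‖| * |‖x‖ - ‖x'‖| ≤ 2 * ‖x - x'‖ :=
    mul_le_mul h3 h1 (abs_nonneg _) (by norm_num)

lemma comp_est {γ : Type*} [NormedAddCommGroup γ] [NormedSpace ℝ γ] {c c' K : ℝ} {x x' : γ}
    (hc0 : 0 ≤ c) (hcK : c ≤ K) (hx' : ‖x'‖ ≤ 1) :
    ‖c•x - c'•x'‖ ≤ K*‖x-x'‖ + |c-c'| := by
  have hd : c•x - c'•x' = c•(x-x') + (c-c')•x' := by
    rw [smul_sub, sub_smul]; abel
  rw [hd]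
  refine le_trans (norm_add_le _ _) ?_
  rw [norm_smul, norm_smul, Real.norm_eq_abs, Real.norm_eq_abs, abs_of_nonneg hc0]
  have h1 : c * ‖x - x'‖ ≤ K * ‖x - x'‖ := mul_le_mul_of_nonneg_right hcK (norm_nonneg _)
  have h2 : |c-c'| * ‖x'‖ ≤ |c-c'| * 1 := mul_le_mul_of_nonneg_left hx' (abs_nonneg _)
  linarith

lemma fmap_lip {p q : WithLp 2 (α × β)} (hp : p ∈ pb) (hq : q ∈ pb) :
    dist (fmap p) (fmap q) ≤ 10 * dist p q := by
  obtain ⟨hp1, hp2⟩ := hp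
  obtain ⟨hq1, hq2⟩ := hq
  set x := (WithLp.equiv 2 (α × β) p).1
  set y := (WithLp.equiv 2 (α × β) p).2
  set x' := (WithLp.equiv 2 (α × β) q).1
  set y' := (WithLp.equiv 2 (α × β) q).2
  have hu0 : (0:ℝ) ≤ ‖x‖^2 := sq_nonneg _
  have hv0 : (0:ℝ) ≤ ‖y‖^2 := sq_nonneg _
  have hu1 := sq_lt_one_of_norm_lt_one hp1
  have hv1 := sq_lt_one_of_norm_lt_one hp2
  have hu0' : (0:ℝ) ≤ ‖x'‖^2 := sq_nonneg _
  have hv0' : (0:ℝ) ≤ ‖y'‖^2 := sq_nonneg _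
  have hu1' := sq_lt_one_of_norm_lt_one hq1
  have hv1' := sq_lt_one_of_norm_lt_one hq2
  -- distances of components
  have hxd : ‖x - x'‖ ≤ ‖p - q‖ := by
    rw [← equiv_sub_fst]; exact norm_fst_le _
  have hyd : ‖y - y'‖ ≤ ‖p - q‖ := by
    rw [← equiv_sub_snd]; exact norm_snd_le _
  have hud : |‖x‖^2 - ‖x'‖^2| ≤ 2*‖p - q‖ :=
    le_trans (normsq_lip hp1.le hq1.le) (by linarith)
  have hvd : |‖y‖^2 - ‖y'‖^2| ≤ 2*‖p - q‖ :=
    le_trans (normsq_lip hp2.le hq2.le) (by linarith)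
  -- coefficient differences
  have hc1 : |Real.sqrt (Af (‖x‖^2) (‖y‖^2)) - Real.sqrt (Af (‖x'‖^2) (‖y'‖^2))| ≤ 4*‖p-q‖ :=
    le_trans (fcoef_lip hu0 hu1 hv0 hv1 hu0' hu1' hv0' hv1') (by linarith)
  have hc2 : |Real.sqrt (Af (‖y‖^2) (‖x‖^2)) - Real.sqrt (Af (‖y'‖^2) (‖x'‖^2))| ≤ 4*‖p-q‖ :=
    le_trans (fcoef_lip hv0 hv1 hu0 hu1 hv0' hv1' hu0' hu1') (by linarith)
  -- coefficient bounds
  have hb1 : Real.sqrt (Af (‖x‖^2) (‖y‖^2)) ≤ 1 :=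
    Real.sqrt_le_one.mpr (Af_le hu0 hu1 hv0 hv1)
  have hb2 : Real.sqrt (Af (‖y‖^2) (‖x‖^2)) ≤ 1 :=
    Real.sqrt_le_one.mpr (Af_le hv0 hv1 hu0 hu1)
  -- assemble
  rw [dist_eq_norm]
  have hsplit : ‖fmap p - fmap q‖
      ≤ ‖(WithLp.equiv 2 (α × β) (fmap p)).1 - (WithLp.equiv 2 (α × β) (fmap q)).1‖
        + ‖(WithLp.equiv 2 (α × β) (fmap p)).2 - (WithLp.equiv 2 (α × β) (fmap q)).2‖ := by
    rw [← equiv_sub_fst, ← equiv_sub_snd]; exact norm_le_add _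
  have hcomp1 : ‖(WithLp.equiv 2 (α × β) (fmap p)).1 - (WithLp.equiv 2 (α × β) (fmap q)).1‖
      ≤ 1*‖x - x'‖ + |Real.sqrt (Af (‖x‖^2) (‖y‖^2)) - Real.sqrt (Af (‖x'‖^2) (‖y'‖^2))| := by
    rw [fmap_fst, fmap_fst]
    exact comp_est (Real.sqrt_nonneg _) hb1 hq1.le
  have hcomp2 : ‖(WithLp.equiv 2 (α × β) (fmap p)).2 - (WithLp.equiv 2 (α × β) (fmap q)).2‖
      ≤ 1*‖y - y'‖ + |Real.sqrt (Af (‖y‖^2) (‖x‖^2)) - Real.sqrt (Af (‖y'‖^2) (‖x'‖^2))| := by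
    rw [fmap_snd, fmap_snd]
    exact comp_est (Real.sqrt_nonneg _) hb2 hq2.le
  rw [dist_eq_norm]
  linarith

lemma inv_sqrt_le_two {a : ℝ} (ha : 1/2 ≤ a) : 1/Real.sqrt a ≤ 2 := by
  have hq : Real.sqrt (1/4) = 1/2 := by
    rw [show (1/4:ℝ) = (1/2)^2 by norm_num, Real.sqrt_sq (by norm_num : (0:ℝ) ≤ 1/2)]
  have h1 : (1/2:ℝ) ≤ Real.sqrt a := by
    rw [← hq]; exact Real.sqrt_le_sqrt (by linarith)
  rw [div_le_iff₀ (by linarith : (0:ℝ) < Real.sqrt a)]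
  linarith

lemma gmap_lip {q q' : WithLp 2 (α × β)} (hq : q ∈ ball (0 : WithLp 2 (α × β)) 1)
    (hq' : q' ∈ ball (0 : WithLp 2 (α × β)) 1) :
    dist (gmap q) (gmap q') ≤ 500 * dist q q' := by
  have hqm := mem_ball_zero_iff.1 hq
  have hqm' := mem_ball_zero_iff.1 hq'
  set w := (WithLp.equiv 2 (α × β) q).1 with hw
  set z := (WithLp.equiv 2 (α × β) q).2 with hz
  set w' := (WithLp.equiv 2 (α × β) q').1 with hw'
  set z' := (WithLp.equiv 2 (α × β) q').2 with hz'
  have hP : (0:ℝ) ≤ ‖w‖^2 := sq_nonneg _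
  have hQ : (0:ℝ) ≤ ‖z‖^2 := sq_nonneg _
  have hP' : (0:ℝ) ≤ ‖w'‖^2 := sq_nonneg _
  have hQ' : (0:ℝ) ≤ ‖z'‖^2 := sq_nonneg _
  have hPQ : ‖w‖^2 + ‖z‖^2 < 1 := by
    have h := norm_sq_eq q
    have := sq_lt_one_of_norm_lt_one hqm
    rw [h] at this; exact this
  have hPQ' : ‖w'‖^2 + ‖z'‖^2 < 1 := by
    have h := norm_sq_eq q'
    have := sq_lt_one_of_norm_lt_one hqm'
    rw [h] at this; exact this
  have hw1 : ‖w‖ ≤ 1 := le_trans (norm_fst_le q) hqm.le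
  have hz1 : ‖z‖ ≤ 1 := le_trans (norm_snd_le q) hqm.le
  have hw1' : ‖w'‖ ≤ 1 := le_trans (norm_fst_le q') hqm'.le
  have hz1' : ‖z'‖ ≤ 1 := le_trans (norm_snd_le q') hqm'.le
  obtain ⟨hu0, hu1, hv0, hv1⟩ := round_mem hP hQ hPQ
  -- component distances
  have hxd : ‖w - w'‖ ≤ ‖q - q'‖ := by rw [← equiv_sub_fst]; exact norm_fst_le _
  have hyd : ‖z - z'‖ ≤ ‖q - q'‖ := by rw [← equiv_sub_snd]; exact norm_snd_le _
  have hud : |‖w‖^2 - ‖w'‖^2| ≤ 2*‖q - q'‖ := le_trans (normsq_lip hw1 hw1') (by linarith)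
  have hvd : |‖z‖^2 - ‖z'‖^2| ≤ 2*‖q - q'‖ := le_trans (normsq_lip hz1 hz1') (by linarith)
  -- coefficient estimates
  have hc1 : |1/Real.sqrt (Af (uf (‖w‖^2) (‖z‖^2)) (vf (‖w‖^2) (‖z‖^2)))
      - 1/Real.sqrt (Af (uf (‖w'‖^2) (‖z'‖^2)) (vf (‖w'‖^2) (‖z'‖^2)))| ≤ 200*‖q-q'‖ := by
    refine le_trans (gcoef_lip hP hQ hPQ hP' hQ' hPQ') ?_
    linarith
  have hc2 : |1/Real.sqrt (Af (vf (‖w‖^2) (‖z‖^2)) (uf (‖w‖^2) (‖z‖^2)))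
      - 1/Real.sqrt (Af (vf (‖w'‖^2) (‖z'‖^2)) (uf (‖w'‖^2) (‖z'‖^2)))| ≤ 200*‖q-q'‖ := by
    refine le_trans (gcoef_lip' hP hQ hPQ hP' hQ' hPQ') ?_
    linarith
  -- coefficient bounds
  have hb1 : 1/Real.sqrt (Af (uf (‖w‖^2) (‖z‖^2)) (vf (‖w‖^2) (‖z‖^2))) ≤ 2 :=
    inv_sqrt_le_two (Af_ge hu0 hu1 hv0 hv1)
  have hb2 : 1/Real.sqrt (Af (vf (‖w‖^2) (‖z‖^2)) (uf (‖w‖^2) (‖z‖^2))) ≤ 2 :=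
    inv_sqrt_le_two (Af_ge hv0 hv1 hu0 hu1)
  have hn1 : (0:ℝ) ≤ 1/Real.sqrt (Af (uf (‖w‖^2) (‖z‖^2)) (vf (‖w‖^2) (‖z‖^2))) := by positivity
  have hn2 : (0:ℝ) ≤ 1/Real.sqrt (Af (vf (‖w‖^2) (‖z‖^2)) (uf (‖w‖^2) (‖z‖^2))) := by positivity
  rw [dist_eq_norm]
  have hsplit : ‖gmap q - gmap q'‖
      ≤ ‖(WithLp.equiv 2 (α × β) (gmap q)).1 - (WithLp.equiv 2 (α × β) (gmap q')).1‖
        + ‖(WithLp.equiv 2 (α × β) (gmap q)).2 - (WithLp.equiv 2 (α × β) (gmap q')).2‖ := by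
    rw [← equiv_sub_fst, ← equiv_sub_snd]; exact norm_le_add _
  have hcomp1 : ‖(WithLp.equiv 2 (α × β) (gmap q)).1 - (WithLp.equiv 2 (α × β) (gmap q')).1‖
      ≤ 2*‖w - w'‖ + |1/Real.sqrt (Af (uf (‖w‖^2) (‖z‖^2)) (vf (‖w‖^2) (‖z‖^2)))
      - 1/Real.sqrt (Af (uf (‖w'‖^2) (‖z'‖^2)) (vf (‖w'‖^2) (‖z'‖^2)))| := by
    rw [gmap_fst, gmap_fst]
    exact comp_est hn1 hb1 hw1'
  have hcomp2 : ‖(WithLp.equiv 2 (α × β) (gmap q)).2 - (WithLp.equiv 2 (α × β) (gmap q')).2‖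
      ≤ 2*‖z - z'‖ + |1/Real.sqrt (Af (vf (‖w‖^2) (‖z‖^2)) (uf (‖w‖^2) (‖z‖^2)))
      - 1/Real.sqrt (Af (vf (‖w'‖^2) (‖z'‖^2)) (uf (‖w'‖^2) (‖z'‖^2)))| := by
    rw [gmap_snd, gmap_snd]
    exact comp_est hn2 hb2 hz1'
  rw [dist_eq_norm]
  have hnn : (0:ℝ) ≤ ‖q - q'‖ := norm_nonneg _
  linarith

end Vec

end
end QIDB

/-- `𝔹ⁿ × 𝔹ᵐ` is diffeomorphic to `𝔹^{n+m}` by a bi-Lipschitz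
(quasi-isometric) diffeomorphism. -/
theorem prod_balls_quasiIsometric_diffeo_ball
    (n m : ℕ) (hn : 0 < n) (hm : 0 < m) :
    ∃ (f : WithLp 2 (EuclideanSpace ℝ (Fin n) × EuclideanSpace ℝ (Fin m)) →
        EuclideanSpace ℝ (Fin (n + m)))
      (g : EuclideanSpace ℝ (Fin (n + m)) →
        WithLp 2 (EuclideanSpace ℝ (Fin n) × EuclideanSpace ℝ (Fin m)))
      (c C : ℝ), 0 < c ∧ c ≤ C ∧
      Set.BijOn f (prodBall n m) (ball (0 : EuclideanSpace ℝ (Fin (n + m))) 1) ∧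
      ContDiffOn ℝ (⊤ : ℕ∞) f (prodBall n m) ∧
      ContDiffOn ℝ (⊤ : ℕ∞) g (ball (0 : EuclideanSpace ℝ (Fin (n + m))) 1) ∧
      Set.EqOn (g ∘ f) id (prodBall n m) ∧
      Set.EqOn (f ∘ g) id (ball (0 : EuclideanSpace ℝ (Fin (n + m))) 1) ∧
      (∀ p ∈ prodBall n m, ∀ q ∈ prodBall n m,
        c * dist p q ≤ dist (f p) (f q) ∧ dist (f p) (f q) ≤ C * dist p q) := by
  classical
  set α := EuclideanSpace ℝ (Fin n)
  set β := EuclideanSpace ℝ (Fin m)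
  have hrank : Module.finrank ℝ (WithLp 2 (α × β)) = n + m := by
    rw [(WithLp.linearEquiv 2 ℝ _).finrank_eq, Module.finrank_prod, finrank_euclideanSpace_fin,
      finrank_euclideanSpace_fin]
  let ι : WithLp 2 (α × β) ≃ₗᵢ[ℝ] EuclideanSpace ℝ (Fin (n+m)) :=
    (stdOrthonormalBasis ℝ _).repr.trans (LinearIsometryEquiv.piLpCongrLeft 2 ℝ ℝ (finCongr hrank))
  have hpb : prodBall n m = (QIDB.pb : Set (WithLp 2 (α × β))) := rfl
  -- the maps
  refine ⟨fun p => ι (QIDB.fmap p), fun z => QIDB.gmap (ι.symm z), 1/500, 10,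
    by norm_num, by norm_num, ?_, ?_, ?_, ?_, ?_, ?_⟩
  · -- BijOn
    rw [hpb]
    have hmapsto : MapsTo (fun p => ι (QIDB.fmap p)) QIDB.pb
        (ball (0 : EuclideanSpace ℝ (Fin (n+m))) 1) := by
      intro p hp
      have := QIDB.fmap_mem hp
      rw [mem_ball_zero_iff] at this ⊢
      simpa [ι.norm_map] using this
    have hinv : ∀ p ∈ (QIDB.pb : Set (WithLp 2 (α × β))),
        QIDB.gmap (ι.symm (ι (QIDB.fmap p))) = p := by
      intro p hp
      rw [ι.symm_apply_apply]
      exact QIDB.gmap_fmap hp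
    refine ⟨hmapsto, ?_, ?_⟩
    · intro a ha b hb hab
      have := hinv a ha
      rw [← hinv a ha, ← hinv b hb]
      simp only at hab
      rw [hab]
    · intro b hb
      have hbe : ι.symm b ∈ ball (0 : WithLp 2 (α × β)) 1 := by
        rw [mem_ball_zero_iff] at hb ⊢
        simpa [ι.symm.norm_map] using hb
      refine ⟨QIDB.gmap (ι.symm b), QIDB.gmap_mem hbe, ?_⟩
      simp only
      rw [QIDB.fmap_gmap hbe, ι.apply_symm_apply]
  · -- smoothness of f
    rw [hpb]
    exact (ι.toContinuousLinearEquiv.toContinuousLinearMap.contDiff.comp_contDiffOn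
      QIDB.fmap_contDiffOn)
  · -- smoothness of g
    have hmaps : MapsTo (fun z => ι.symm z) (ball (0 : EuclideanSpace ℝ (Fin (n+m))) 1)
        (ball (0 : WithLp 2 (α × β)) 1) := by
      intro z hz
      rw [mem_ball_zero_iff] at hz ⊢
      simpa [ι.symm.norm_map] using hz
    exact QIDB.gmap_contDiffOn.comp
      (ι.symm.toContinuousLinearEquiv.toContinuousLinearMap.contDiff.contDiffOn) hmaps
  · -- g ∘ f = id
    rw [hpb]
    intro p hp
    simp only [Function.comp_apply, id_eq]
    rw [ι.symm_apply_apply]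
    exact QIDB.gmap_fmap hp
  · -- f ∘ g = id
    intro z hz
    have hbe : ι.symm z ∈ ball (0 : WithLp 2 (α × β)) 1 := by
      rw [mem_ball_zero_iff] at hz ⊢
      simpa [ι.symm.norm_map] using hz
    simp only [Function.comp_apply, id_eq]
    rw [QIDB.fmap_gmap hbe, ι.apply_symm_apply]
  · -- bi-Lipschitz
    rw [hpb]
    intro p hp q hq
    have hdist : dist (ι (QIDB.fmap p)) (ι (QIDB.fmap q)) = dist (QIDB.fmap p) (QIDB.fmap q) :=
      ι.dist_map _ _
    constructor
    · rw [hdist]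
      have h1 : dist p q = dist (QIDB.gmap (QIDB.fmap p)) (QIDB.gmap (QIDB.fmap q)) := by
        rw [QIDB.gmap_fmap hp, QIDB.gmap_fmap hq]
      have h2 := QIDB.gmap_lip (QIDB.fmap_mem hp) (QIDB.fmap_mem hq)
      rw [← h1] at h2
      linarith
    · rw [hdist]
      exact QIDB.fmap_lip hp hq
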